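/- arXiv:2408.07392 — 6 statements merged into one kernel-verified Lean document; each statement's English description precedes it below -/
import Mathlib

section
/- Let X, Y be real Hilbert spaces, A : X → Y* a bounded linear operator, and B : X → Y a bounded linear operator such that ⟨Au, Bu⟩ ≥ c‖u‖²_X for all u ∈ X with c > 0. Suppose further that for each nonzero v ∈ Y there exists u ∈ X with ⟨Au, v⟩ ≠ 0. Then A is bijective. -/
open scoped RealInnerProductSpace

/-- Banach–Nečas–Babuška theorem: a bounded linear operator `A : X → Y*` between real
Hilbert spaces is bijective provided there is a bounded linear `B : X → Y` witnessing
the inf-sup condition `⟨Au, Bu⟩ ≥ c‖u‖²` with `c > 0`, together with the adjoint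
injectivity condition: for every nonzero `v ∈ Y` there exists `u ∈ X` with `⟨Au, v⟩ ≠ 0`. -/
theorem banach_necas_babuska
    {X Y : Type*} [NormedAddCommGroup X] [InnerProductSpace ℝ X] [CompleteSpace X]
    [NormedAddCommGroup Y] [InnerProductSpace ℝ Y] [CompleteSpace Y]
    (A : X →L[ℝ] StrongDual ℝ Y) (B : X →L[ℝ] Y) (c : ℝ) (hc : 0 < c)
    (hcoer : ∀ u : X, c * ‖u‖ ^ 2 ≤ A u (B u))
    (hinj : ∀ v : Y, v ≠ 0 → ∃ u : X, A u v ≠ 0) :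
    Function.Bijective A := by
  set e := InnerProductSpace.toDual ℝ Y with he
  set T : X →L[ℝ] Y :=
    { toFun := fun u => e.symm (A u)
      map_add' := fun u v => by simp
      map_smul' := fun r u => by simp [starRingEnd_apply]
      cont := e.symm.continuous.comp A.continuous } with hT
  have hTA : ∀ u (w : Y), A u w = ⟪T u, w⟫ := by
    intro u w
    have : e (T u) = A u := by
      simp [hT, he]
    rw [← this]
    rfl
  -- antilipschitz bound
  have hbound : ∀ u : X, ‖u‖ ≤ (‖B‖ / c) * ‖T u‖ := by
    intro u
    have h1 : c * ‖u‖ ^ 2 ≤ ‖T u‖ * (‖B‖ * ‖u‖) := by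
      calc c * ‖u‖ ^ 2 ≤ A u (B u) := hcoer u
        _ = ⟪T u, B u⟫ := hTA u (B u)
        _ ≤ ‖T u‖ * ‖B u‖ := real_inner_le_norm _ _
        _ ≤ ‖T u‖ * (‖B‖ * ‖u‖) := by
            exact mul_le_mul_of_nonneg_left (B.le_opNorm u) (norm_nonneg _)
    rcases eq_or_ne u 0 with rfl | hu
    · simp [mul_nonneg (div_nonneg (norm_nonneg _) hc.le) (norm_nonneg _)]
    · have hun : 0 < ‖u‖ := norm_pos_iff.2 hu
      have : c * ‖u‖ ≤ ‖T u‖ * ‖B‖ := by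
        have := h1
        nlinarith
      rw [div_mul_eq_mul_div, le_div_iff₀ hc]
      nlinarith
  have hTinj : Function.Injective T := by
    intro u v huv
    have h := hbound (u - v)
    rw [map_sub, huv, sub_self, norm_zero, mul_zero] at h
    have := norm_nonneg (u - v)
    have : ‖u - v‖ = 0 := le_antisymm h this
    rwa [norm_sub_eq_zero_iff] at this
  -- closed range
  have hK : 0 ≤ ‖B‖ / c := div_nonneg (norm_nonneg _) hc.le
  have hanti : AntilipschitzWith ⟨‖B‖ / c, hK⟩ T :=
    ContinuousLinearMap.antilipschitz_of_bound T hbound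
  have hclosed : IsClosed (Set.range T) := hanti.isClosed_range T.uniformContinuous
  set K : Submodule ℝ Y := LinearMap.range (T : X →ₗ[ℝ] Y) with hKdef
  have hKclosed : IsClosed (K : Set Y) := by
    have : (K : Set Y) = Set.range T := by
      ext y; simp [hKdef, LinearMap.mem_range]
    rw [this]; exact hclosed
  haveI : CompleteSpace K := hKclosed.completeSpace_coe
  have horth : Kᗮ = ⊥ := by
    rw [Submodule.eq_bot_iff]
    intro v hv
    by_contra hvne
    obtain ⟨u, hu⟩ := hinj v hvne
    apply hu
    rw [hTA]
    exact hv (T u) ⟨u, rfl⟩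
  have hKtop : K = ⊤ := by
    have := Submodule.orthogonal_eq_bot_iff (K := K)
    exact this.mp horth
  have hTsurj : Function.Surjective T := by
    intro y
    have : y ∈ K := hKtop ▸ Submodule.mem_top
    exact this
  have hTbij : Function.Bijective T := ⟨hTinj, hTsurj⟩
  have hA : (A : X → StrongDual ℝ Y) = e ∘ T := by
    funext u
    have : e (T u) = A u := by simp [hT, he]
    simp [this]
  rw [hA]
  exact e.bijective.comp hTbij
end

section
/- Let Z be a real reflexive Banach space and S : Z → Z* a bounded linear operator. Suppose there exist a bounded linear operator P : Z → Z and a constant c > 0 with ⟨Sη, Pη⟩ ≥ c‖η‖²_Z for all η ∈ Z, and suppose ⟨Sμ, μ⟩ > 0 for all μ ≠ 0. Then S is bijective. -/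
/-- Bijectivity of a Steklov–Poincaré-type operator. Let `Z` be a real reflexive Banach
space and `S : Z → Z*` bounded linear. If there are a bounded linear `P : Z → Z` and
`c > 0` with `⟨Sη, Pη⟩ ≥ c‖η‖²` for all `η`, and `⟨Sμ, μ⟩ > 0` for all `μ ≠ 0`, then
`S` is bijective. -/
theorem steklov_poincare_bijective
    {Z : Type*} [NormedAddCommGroup Z] [NormedSpace ℝ Z] [CompleteSpace Z]
    (hrefl : Function.Bijective (NormedSpace.inclusionInDoubleDual ℝ Z))
    (S : Z →L[ℝ] StrongDual ℝ Z) (P : Z →L[ℝ] Z) (c : ℝ) (hc : 0 < c)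
    (hcoer : ∀ η : Z, c * ‖η‖ ^ 2 ≤ S η (P η))
    (hpos : ∀ μ : Z, μ ≠ 0 → 0 < S μ μ) :
    Function.Bijective S := by
  rw [ContinuousLinearMap.bijective_iff_dense_range_and_antilipschitz]
  constructor
  · -- dense range
    by_contra h
    obtain ⟨x, hx⟩ : ∃ x, x ∉ (S.range).topologicalClosure := by
      by_contra h'
      push_neg at h'
      exact h (Submodule.eq_top_iff'.2 h')
    obtain ⟨f, u, hfu, hux⟩ := geometric_hahn_banach_closed_point
      ((S.range).topologicalClosure.convex)
      (S.range).isClosed_topologicalClosure hx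
    have hf0 : ∀ y ∈ (S.range).topologicalClosure, f y = 0 := by
      intro y hy
      by_contra hfy
      rcases lt_or_gt_of_ne hfy with h1 | h1
      · have := hfu (((u + 1) / f y) • y) (Submodule.smul_mem _ _ hy)
        rw [map_smul] at this
        simp only [smul_eq_mul] at this
        rw [div_mul_cancel₀ _ hfy] at this
        linarith
      · have := hfu (((u + 1) / f y) • y) (Submodule.smul_mem _ _ hy)
        rw [map_smul] at this
        simp only [smul_eq_mul] at this
        rw [div_mul_cancel₀ _ hfy] at this
        linarith
    obtain ⟨μ, hμ⟩ := hrefl.2 f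
    have hμ0 : μ = 0 := by
      by_contra hμne
      have h1 : S μ μ = 0 := by
        have := hf0 (S μ) (Submodule.le_topologicalClosure _ ⟨μ, rfl⟩)
        rw [← hμ] at this
        simpa [NormedSpace.inclusionInDoubleDual] using this
      exact absurd h1 (ne_of_gt (hpos μ hμne))
    have hf : f = 0 := by rw [← hμ, hμ0, map_zero]
    have h0 : (0 : ℝ) < u := by
      have := hfu 0 (Submodule.zero_mem _)
      simpa using this
    rw [hf] at hux
    simp at hux
    linarith
  · -- antilipschitz
    refine ⟨⟨(‖P‖ + 1) / c, by positivity⟩, ?_⟩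
    apply AddMonoidHomClass.antilipschitz_of_bound
    intro η
    rcases eq_or_ne η 0 with rfl | hη
    · simp
    have hnorm : 0 < ‖η‖ := norm_pos_iff.2 hη
    have h1 : c * ‖η‖ ^ 2 ≤ ‖S η‖ * ((‖P‖ + 1) * ‖η‖) := by
      calc c * ‖η‖ ^ 2 ≤ S η (P η) := hcoer η
        _ ≤ ‖S η (P η)‖ := le_abs_self _
        _ ≤ ‖S η‖ * ‖P η‖ := (S η).le_opNorm _
        _ ≤ ‖S η‖ * (‖P‖ * ‖η‖) := by
            exact mul_le_mul_of_nonneg_left (P.le_opNorm η) (norm_nonneg _)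
        _ ≤ ‖S η‖ * ((‖P‖ + 1) * ‖η‖) := by
            apply mul_le_mul_of_nonneg_left _ (norm_nonneg _)
            nlinarith [norm_nonneg (S η)]
    have h2 : c * ‖η‖ ≤ ‖S η‖ * (‖P‖ + 1) := by
      nlinarith
    show ‖η‖ ≤ (‖P‖ + 1) / c * ‖S η‖
    rw [div_mul_eq_mul_div, le_div_iff₀ hc]
    nlinarith
end

section
/- Let Z be a real Hilbert space with an auxiliary Hilbert space H such that Z embeds continuously and densely into H, and let J : Z → Z* be defined by ⟨Jη, μ⟩ = (η, μ)_H. Let S : Z → Z* be bounded linear, P : Z → Z bounded linear with ⟨Sη, Pη⟩ ≥ c‖η‖²_Z, ⟨Jη, Pη⟩ ≥ 0, ⟨Sμ, μ⟩ > 0 for μ ≠ 0, and ⟨Jμ, μ⟩ ≥ 0. Then for every s > 0 the operator sJ + S : Z → Z* is bijective. -/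
open scoped RealInnerProductSpace

/-- Bijectivity of `sJ + S`. Let `Z`, `H` be real Hilbert spaces with a continuous dense
embedding `e : Z → H`, and let `J : Z → Z*` be given by `⟨Jη, μ⟩ = (η, μ)_H`. If
`S : Z → Z*` is bounded linear and `P : Z → Z` is bounded linear with
`⟨Sη, Pη⟩ ≥ c‖η‖²` (`c > 0`), `⟨Jη, Pη⟩ ≥ 0`, `⟨Sμ, μ⟩ > 0` for `μ ≠ 0`, and
`⟨Jμ, μ⟩ ≥ 0`, then `sJ + S : Z → Z*` is bijective for every `s > 0`. -/
theorem sJ_add_S_bijective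
    {Z H : Type*} [NormedAddCommGroup Z] [InnerProductSpace ℝ Z] [CompleteSpace Z]
    [NormedAddCommGroup H] [InnerProductSpace ℝ H] [CompleteSpace H]
    (e : Z →L[ℝ] H) (he_inj : Function.Injective e) (he_dense : DenseRange e)
    (J S : Z →L[ℝ] StrongDual ℝ Z)
    (hJ : ∀ η μ : Z, J η μ = ⟪e η, e μ⟫)
    (P : Z →L[ℝ] Z) (c : ℝ) (hc : 0 < c)
    (hScoer : ∀ η : Z, c * ‖η‖ ^ 2 ≤ S η (P η))
    (hJP : ∀ η : Z, 0 ≤ J η (P η))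
    (hSpos : ∀ μ : Z, μ ≠ 0 → 0 < S μ μ)
    (hJpos : ∀ μ : Z, 0 ≤ J μ μ) :
    ∀ s : ℝ, 0 < s → Function.Bijective (s • J + S) := by
  intro s hs
  set T : Z →L[ℝ] StrongDual ℝ Z := s • J + S with hTdef
  have hTapp : ∀ η μ : Z, T η μ = s * J η μ + S η μ := by
    intro η μ; simp [hTdef]
  -- coercivity of T against P
  have hTcoer : ∀ η : Z, c * ‖η‖ ^ 2 ≤ T η (P η) := by
    intro η
    have h1 := hScoer η
    have h2 := mul_nonneg hs.le (hJP η)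
    rw [hTapp]; linarith
  -- positivity of T on the diagonal
  have hTpos : ∀ μ : Z, μ ≠ 0 → 0 < T μ μ := by
    intro μ hμ
    have h1 := hSpos μ hμ
    have h2 := mul_nonneg hs.le (hJpos μ)
    rw [hTapp]; linarith
  -- transfer to an operator on Z via the Riesz isomorphism
  let ι := (InnerProductSpace.toDual ℝ Z).symm
  let A : Z →L[ℝ] Z := (ι.toContinuousLinearEquiv.toContinuousLinearMap).comp T
  have hAdef : ∀ η : Z, A η = ι (T η) := fun η => rfl
  have hAinner : ∀ η μ : Z, ⟪A η, μ⟫ = T η μ := by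
    intro η μ
    simp [A, ι, InnerProductSpace.toDual_symm_apply]
  have hAnorm : ∀ η : Z, ‖A η‖ = ‖T η‖ := fun η => ι.norm_map _
  -- lower norm bound
  have hbound : ∀ η : Z, ‖η‖ ≤ (‖P‖ / c) * ‖A η‖ := by
    intro η
    rcases eq_or_ne η 0 with rfl | hη
    · simp
    · have hpos : (0:ℝ) < ‖η‖ := norm_pos_iff.mpr hη
      have h1 : c * ‖η‖ ^ 2 ≤ T η (P η) := hTcoer η
      have h2 : T η (P η) ≤ ‖T η‖ * ‖P η‖ := by
        calc T η (P η) ≤ |T η (P η)| := le_abs_self _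
          _ = ‖T η (P η)‖ := (Real.norm_eq_abs _).symm
          _ ≤ ‖T η‖ * ‖P η‖ := (T η).le_opNorm _
      have h3 : ‖P η‖ ≤ ‖P‖ * ‖η‖ := P.le_opNorm _
      have h4 : ‖T η‖ * ‖P η‖ ≤ ‖T η‖ * (‖P‖ * ‖η‖) :=
        mul_le_mul_of_nonneg_left h3 (norm_nonneg _)
      have h5 : c * ‖η‖ ^ 2 ≤ ‖T η‖ * (‖P‖ * ‖η‖) := by linarith
      have h6 : c * ‖η‖ ≤ ‖T η‖ * ‖P‖ := by
        have := mul_le_mul_of_nonneg_right h5 (le_of_lt (inv_pos.mpr hpos))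
        calc c * ‖η‖ = c * ‖η‖ ^ 2 * ‖η‖⁻¹ := by field_simp
          _ ≤ ‖T η‖ * (‖P‖ * ‖η‖) * ‖η‖⁻¹ := this
          _ = ‖T η‖ * ‖P‖ := by field_simp
      rw [hAnorm, div_mul_eq_mul_div, le_div_iff₀ hc]
      calc ‖η‖ * c = c * ‖η‖ := mul_comm _ _
        _ ≤ ‖T η‖ * ‖P‖ := h6
        _ = ‖P‖ * ‖T η‖ := mul_comm _ _
  have hanti : AntilipschitzWith (Real.toNNReal (‖P‖ / c)) A := by
    apply AddMonoidHomClass.antilipschitz_of_bound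
    intro η
    rw [Real.coe_toNNReal _ (by positivity)]
    exact hbound η
  -- closed range
  have hclosed : IsClosed (Set.range A) := hanti.isClosed_range A.uniformContinuous
  -- dense range
  have horth : (LinearMap.range (A : Z →ₗ[ℝ] Z))ᗮ = ⊥ := by
    rw [Submodule.eq_bot_iff]
    intro v hv
    by_contra hv0
    have h1 : ⟪A v, v⟫ = 0 :=
      (Submodule.mem_orthogonal _ _).mp hv (A v) (LinearMap.mem_range_self _ v)
    rw [hAinner] at h1
    exact absurd h1 (ne_of_gt (hTpos v hv0))
  have hdense : (LinearMap.range (A : Z →ₗ[ℝ] Z) : Submodule ℝ Z).topologicalClosure = ⊤ :=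
    Submodule.topologicalClosure_eq_top_iff.mpr horth
  have hrange : Set.range A = Set.univ := by
    have h1 : closure (Set.range A) = Set.range A := hclosed.closure_eq
    have h2 : closure ((LinearMap.range (A : Z →ₗ[ℝ] Z) : Submodule ℝ Z) : Set Z) = Set.univ := by
      have := congrArg (fun (K : Submodule ℝ Z) => (K : Set Z)) hdense
      simpa [Submodule.topologicalClosure_coe] using this
    have h3 : ((LinearMap.range (A : Z →ₗ[ℝ] Z) : Submodule ℝ Z) : Set Z) = Set.range A := by
      ext x; simp [LinearMap.mem_range]
    rw [h3] at h2
    rw [h1] at h2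
    exact h2
  have hAsurj : Function.Surjective A := fun y => by
    have : y ∈ Set.range A := by rw [hrange]; trivial
    exact this
  have hAbij : Function.Bijective A := ⟨hanti.injective, hAsurj⟩
  -- transfer back to T
  constructor
  · intro x y hxy
    apply hAbij.1
    rw [hAdef, hAdef, hxy]
  · intro y
    obtain ⟨x, hx⟩ := hAbij.2 (ι y)
    exact ⟨x, ι.injective (by rw [← hAdef, hx])⟩
end

section
/- Let H be a real Hilbert space and let S₁, S₂ : D(Sᵢ) ⊆ H → H be (possibly multivalued) maximal monotone operators such that S₁ + S₂ has a zero shifted by given data, i.e., there is η ∈ D(S₁) ∩ D(S₂) with 0 ∈ S₁η + S₂η. For s > 0 define the Peaceman–Rachford iteration η^{n+1} = (sI + S₂)^{-1}(sI - S₁)(sI + S₁)^{-1}(sI - S₂)η^n. Then (S₁η^n - S₁η, η^n - η)_H → 0 and (S₂η^n - S₂η, η^n - η)_H → 0 as n → ∞. -/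
open scoped RealInnerProductSpace
open Filter

/-- A (possibly multivalued) operator `S : D(S) ⊆ H → H`, given as `S : H → Set H`
with domain `{x | (S x).Nonempty}`, is monotone. -/
def IsMonotoneOp {H : Type*} [NormedAddCommGroup H] [InnerProductSpace ℝ H]
    (S : H → Set H) : Prop :=
  ∀ x y u v : H, u ∈ S x → v ∈ S y → 0 ≤ ⟪u - v, x - y⟫

/-- Maximal monotone: monotone with `range (I + S) = H`. -/
def IsMaximalMonotoneOp {H : Type*} [NormedAddCommGroup H] [InnerProductSpace ℝ H]
    (S : H → Set H) : Prop :=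
  IsMonotoneOp S ∧ ∀ z : H, ∃ x u : H, u ∈ S x ∧ x + u = z

private lemma refl_sq_aux {H : Type*} [NormedAddCommGroup H] [InnerProductSpace ℝ H]
    (A B : H) : ‖A - B‖ ^ 2 = ‖A + B‖ ^ 2 - 4 * ⟪B, A⟫ := by
  have h1 := norm_sub_sq_real A B
  have h2 := norm_add_sq_real A B
  have h3 : ⟪A, B⟫ = ⟪B, A⟫ := (real_inner_comm A B).symm
  nlinarith [h1, h2, h3]

/-- Lions–Mercier convergence of the Peaceman–Rachford iteration
`η^{n+1} = (sI + S₂)⁻¹(sI - S₁)(sI + S₁)⁻¹(sI - S₂) ηⁿ` for maximal monotone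
operators `S₁, S₂` on a real Hilbert space `H`. The iteration is encoded by the
selections `y n ∈ S₂(η n)` and `x n ∈ S₁(w n)`, where `w n = (sI+S₁)⁻¹(sI-S₂)ηⁿ`:
`s·w n + x n = s·η n - y n` and `s·η (n+1) + y (n+1) = 2s·w n - (s·η n - y n)`.
If `η` solves `0 ∈ S₁η + S₂η` (via selections `a ∈ S₁η`, `b ∈ S₂η`, `a + b = 0`),
then `(S₂ηⁿ - S₂η, ηⁿ - η)_H → 0` and `(S₁wⁿ - S₁η, wⁿ - η)_H → 0` as `n → ∞`. -/
theorem peaceman_rachford_lions_mercier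
    {H : Type*} [NormedAddCommGroup H] [InnerProductSpace ℝ H] [CompleteSpace H]
    (S₁ S₂ : H → Set H)
    (hS₁ : IsMaximalMonotoneOp S₁) (hS₂ : IsMaximalMonotoneOp S₂)
    (ηsol a b : H) (ha : a ∈ S₁ ηsol) (hb : b ∈ S₂ ηsol) (hab : a + b = 0)
    (s : ℝ) (hs : 0 < s)
    (η w x y : ℕ → H)
    (hy : ∀ n, y n ∈ S₂ (η n))
    (hx : ∀ n, x n ∈ S₁ (w n))
    (hstep1 : ∀ n, s • w n + x n = s • η n - y n)
    (hstep2 : ∀ n, s • η (n + 1) + y (n + 1) = (2 * s) • w n - (s • η n - y n)) :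
    Tendsto (fun n => ⟪y n - b, η n - ηsol⟫) atTop (nhds 0) ∧
    Tendsto (fun n => ⟪x n - a, w n - ηsol⟫) atTop (nhds 0) := by
  obtain ⟨hm₁, -⟩ := hS₁
  obtain ⟨hm₂, -⟩ := hS₂
  set f : ℕ → ℝ := fun n => ⟪y n - b, η n - ηsol⟫ with hfdef
  set g : ℕ → ℝ := fun n => ⟪x n - a, w n - ηsol⟫ with hgdef
  have hf0 : ∀ n, 0 ≤ f n := fun n => hm₂ _ _ _ _ (hy n) hb
  have hg0 : ∀ n, 0 ≤ g n := fun n => hm₁ _ _ _ _ (hx n) ha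
  set d : ℕ → ℝ := fun n => ‖(s • η n + y n) - (s • ηsol + b)‖ ^ 2 with hddef
  have key : ∀ n, d (n + 1) = d n - 4 * s * (f n + g n) := by
    intro n
    have h1 := hstep1 n
    have h2 := hstep2 n
    have e1 : (s • η n + y n) - (s • ηsol + b)
        = s • (η n - ηsol) + (y n - b) := by module
    have e2 : s • (η n - ηsol) - (y n - b) = s • (w n - ηsol) + (x n - a) := by
      linear_combination (norm := module) hab - h1
    have e3 : s • (w n - ηsol) - (x n - a)
        = (s • η (n + 1) + y (n + 1)) - (s • ηsol + b) := by
      linear_combination (norm := module) hab - h1 - h2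
    have i1 : ⟪y n - b, s • (η n - ηsol)⟫ = s * f n := real_inner_smul_right _ _ _
    have i2 : ⟪x n - a, s • (w n - ηsol)⟫ = s * g n := real_inner_smul_right _ _ _
    calc d (n + 1) = ‖s • (w n - ηsol) - (x n - a)‖ ^ 2 := by simp only [hddef]; rw [← e3]
      _ = ‖s • (w n - ηsol) + (x n - a)‖ ^ 2 - 4 * (s * g n) := by
          rw [refl_sq_aux, i2]
      _ = ‖s • (η n - ηsol) - (y n - b)‖ ^ 2 - 4 * (s * g n) := by rw [e2]
      _ = ‖s • (η n - ηsol) + (y n - b)‖ ^ 2 - 4 * (s * f n) - 4 * (s * g n) := by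
          rw [refl_sq_aux, i1]
      _ = d n - 4 * s * (f n + g n) := by simp only [hddef]; rw [e1]; ring
  have hant : Antitone d := by
    apply antitone_nat_of_succ_le
    intro n
    have h := key n
    have h0 : 0 ≤ f n + g n := add_nonneg (hf0 n) (hg0 n)
    nlinarith [hs]
  have hbdd : BddBelow (Set.range d) := by
    refine ⟨0, ?_⟩
    rintro _ ⟨n, rfl⟩
    positivity
  have hdL : Tendsto d atTop (nhds (⨅ n, d n)) := tendsto_atTop_ciInf hant hbdd
  have hdL' : Tendsto (fun n => d (n + 1)) atTop (nhds (⨅ n, d n)) :=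
    hdL.comp (tendsto_add_atTop_nat 1)
  have hsub : Tendsto (fun n => d n - d (n + 1)) atTop (nhds 0) := by
    simpa using hdL.sub hdL'
  have hfg : Tendsto (fun n => f n + g n) atTop (nhds 0) := by
    have hs4 : (4 * s) ≠ 0 := by positivity
    have := hsub.div_const (4 * s)
    simp only [zero_div] at this
    convert this using 2 with n
    rw [key n]
    field_simp
    ring
  constructor
  · exact squeeze_zero hf0 (fun n => le_add_of_nonneg_right (hg0 n)) hfg
  · exact squeeze_zero hg0 (fun n => le_add_of_nonneg_left (hf0 n)) hfg
end

section
/- Let X, Y be Hilbert spaces, A : X → Y* bounded linear, g ∈ Y*, and suppose there exists a bounded linear B : X → Y with ⟨Au, Bu⟩ ≥ c‖u‖²_X (c > 0) and that for every nonzero v ∈ Y there is u ∈ X with ⟨Au, v⟩ ≠ 0. Then the problem ⟨Au, v⟩ = ⟨g, v⟩ for all v ∈ Y has a unique solution u ∈ X, and ‖u‖_X ≤ C‖g‖_{Y*} with C depending only on c and ‖B‖. -/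
open RealInnerProductSpace


/-- Well-posedness of the Petrov–Galerkin problem via Banach–Nečas–Babuška. Let `X`, `Y`
be real Hilbert spaces, `A : X → Y*` bounded linear, `g ∈ Y*`, and suppose there is a
bounded linear `B : X → Y` with `⟨Au, Bu⟩ ≥ c‖u‖²` (`c > 0`) and, for every nonzero
`v ∈ Y`, some `u` with `⟨Au, v⟩ ≠ 0`. Then `⟨Au, v⟩ = ⟨g, v⟩` for all `v ∈ Y` has a
unique solution `u`, and every solution satisfies `‖u‖ ≤ (‖B‖/c)·‖g‖`, a constant
depending only on `c` and `‖B‖`. -/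
theorem petrov_galerkin_wellposed
    {X Y : Type*} [NormedAddCommGroup X] [InnerProductSpace ℝ X] [CompleteSpace X]
    [NormedAddCommGroup Y] [InnerProductSpace ℝ Y] [CompleteSpace Y]
    (A : X →L[ℝ] StrongDual ℝ Y) (B : X →L[ℝ] Y) (c : ℝ) (hc : 0 < c)
    (hcoer : ∀ u : X, c * ‖u‖ ^ 2 ≤ A u (B u))
    (hinj : ∀ v : Y, v ≠ 0 → ∃ u : X, A u v ≠ 0)
    (g : StrongDual ℝ Y) :
    (∃! u : X, ∀ v : Y, A u v = g v) ∧
    ∀ u : X, (∀ v : Y, A u v = g v) → ‖u‖ ≤ ‖B‖ / c * ‖g‖ := by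
  set J := InnerProductSpace.toDual ℝ Y with hJ
  set T : X →L[ℝ] Y :=
    (J.symm.toContinuousLinearEquiv.toContinuousLinearMap).comp A with hT
  have hAT : ∀ (u : X) (v : Y), A u v = ⟪T u, v⟫ := by
    intro u v
    have : T u = J.symm (A u) := rfl
    rw [this]
    rw [← InnerProductSpace.toDual_apply_apply]
    simp [hJ]
  -- a priori bound for solutions
  have bound : ∀ u : X, (∀ v : Y, A u v = g v) → ‖u‖ ≤ ‖B‖ / c * ‖g‖ := by
    intro u hu
    rcases eq_or_ne u 0 with rfl | hu0
    · simp
      positivity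
    · have hnu : 0 < ‖u‖ := norm_pos_iff.mpr hu0
      have h1 : c * ‖u‖ ^ 2 ≤ ‖g‖ * (‖B‖ * ‖u‖) := by
        calc c * ‖u‖ ^ 2 ≤ A u (B u) := hcoer u
          _ = g (B u) := hu (B u)
          _ ≤ ‖g‖ * ‖B u‖ := le_trans (le_abs_self _) (g.le_opNorm (B u))
          _ ≤ ‖g‖ * (‖B‖ * ‖u‖) := by
              gcongr
              exact B.le_opNorm u
      have h2 : c * ‖u‖ ≤ ‖B‖ * ‖g‖ := by
        have := h1
        rw [pow_two] at this
        nlinarith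
      rw [div_mul_eq_mul_div, le_div_iff₀ hc]
      linarith
  -- bounded below
  have below : ∀ u : X, ‖u‖ ≤ ‖B‖ / c * ‖T u‖ := by
    intro u
    rcases eq_or_ne u 0 with rfl | hu0
    · simp
    · have hnu : 0 < ‖u‖ := norm_pos_iff.mpr hu0
      have h1 : c * ‖u‖ ^ 2 ≤ ‖T u‖ * (‖B‖ * ‖u‖) := by
        calc c * ‖u‖ ^ 2 ≤ A u (B u) := hcoer u
          _ = ⟪T u, B u⟫ := hAT u (B u)
          _ ≤ ‖T u‖ * ‖B u‖ := real_inner_le_norm _ _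
          _ ≤ ‖T u‖ * (‖B‖ * ‖u‖) := by
              gcongr
              exact B.le_opNorm u
      have h2 : c * ‖u‖ ≤ ‖B‖ * ‖T u‖ := by
        rw [pow_two] at h1
        nlinarith
      rw [div_mul_eq_mul_div, le_div_iff₀ hc]
      linarith
  have anti : AntilipschitzWith (‖B‖ / c).toNNReal T := by
    refine T.antilipschitz_of_bound fun u => ?_
    rw [Real.coe_toNNReal _ (by positivity)]
    exact below u
  have hclosed : IsClosed (LinearMap.range (T : X →ₗ[ℝ] Y) : Set Y) :=
    anti.isClosed_range T.uniformContinuous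
  have hrange : LinearMap.range (T : X →ₗ[ℝ] Y) = ⊤ := by
    haveI : CompleteSpace (LinearMap.range (T : X →ₗ[ℝ] Y)) := hclosed.completeSpace_coe
    have horth : (LinearMap.range (T : X →ₗ[ℝ] Y))ᗮ = ⊥ := by
      rw [Submodule.eq_bot_iff]
      intro v hv
      by_contra hv0
      obtain ⟨u, hu⟩ := hinj v hv0
      exact hu (by rw [hAT u v, hv (T u) ⟨u, rfl⟩])
    calc LinearMap.range (T : X →ₗ[ℝ] Y) = (LinearMap.range (T : X →ₗ[ℝ] Y))ᗮᗮ :=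
          (Submodule.orthogonal_orthogonal _).symm
      _ = (⊥ : Submodule ℝ Y)ᗮ := by rw [horth]
      _ = ⊤ := Submodule.bot_orthogonal_eq_top
  obtain ⟨u, hu⟩ : ∃ u : X, T u = J.symm g := by
    have : J.symm g ∈ LinearMap.range (T : X →ₗ[ℝ] Y) := hrange ▸ Submodule.mem_top
    exact this
  have husol : ∀ v : Y, A u v = g v := by
    intro v
    rw [hAT u v, hu]
    rw [← InnerProductSpace.toDual_apply_apply]
    simp [hJ]
  refine ⟨⟨u, husol, ?_⟩, bound⟩
  intro u' hu'
  have hdiff : ∀ v : Y, A (u' - u) v = 0 := by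
    intro v
    simp [hu' v, husol v]
  have : c * ‖u' - u‖ ^ 2 ≤ 0 := by
    calc c * ‖u' - u‖ ^ 2 ≤ A (u' - u) (B (u' - u)) := hcoer _
      _ = 0 := hdiff _
  have hn : ‖u' - u‖ ^ 2 ≤ 0 := by nlinarith
  have h0 : u' - u = 0 := by
    have h2 : ‖u' - u‖ ^ 2 = 0 := le_antisymm hn (by positivity)
    have h3 : ‖u' - u‖ = 0 := by
      have := sq_eq_zero_iff.mp h2
      exact this
    exact norm_eq_zero.mp h3
  exact sub_eq_zero.mp h0
end

section
/- Let X, X̃, Z be Hilbert spaces with X ⊆ X̃ continuously, T : X̃ → Z a bounded surjective linear operator with a bounded right inverse R : Z → X, and X⁰ = ker(T|_X), X̃⁰ = ker(T|_{X̃}). Let A : X → X̃* be bounded linear such that for each g ∈ (X̃⁰)* the problem ⟨Au₀, v⟩ = ⟨g, v⟩ for all v ∈ X̃⁰ has a unique solution u₀ ∈ X⁰ with ‖u₀‖_X ≤ C‖g‖. Then for every g ∈ (X̃⁰)* and η ∈ Z there exists a unique u ∈ X with Tu = η and ⟨Au, v⟩ = ⟨g, v⟩ for all v ∈ X̃⁰,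 satisfying ‖u‖_X ≤ C'(‖g‖_{(X̃⁰)*} + ‖η‖_Z). -/
set_option maxHeartbeats 1000000 in
set_option synthInstance.maxHeartbeats 400000 in
/-- Abstract lifting of nonhomogeneous boundary data. Let `X`, `X̃`, `Z` be Hilbert
spaces, `ι : X → X̃` a continuous inclusion, `T : X̃ → Z` bounded surjective with a
bounded right inverse `R : Z → X` (so `T(ι(Rη)) = η`). Write `X̃⁰ = ker T` and
`X⁰ = {u ∈ X : T(ιu) = 0}`. Let `A : X → X̃*` be bounded linear such that for every
`g ∈ (X̃⁰)*` the homogeneous problem `⟨Au₀, v⟩ = ⟨g, v⟩` for all `v ∈ X̃⁰` has a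
unique solution `u₀ ∈ X⁰`, with `‖u₀‖ ≤ C‖g‖`. Then for all `g ∈ (X̃⁰)*` and `η ∈ Z`
there is a unique `u ∈ X` with `T(ιu) = η` and `⟨Au, v⟩ = ⟨g, v⟩` for all `v ∈ X̃⁰`,
satisfying `‖u‖ ≤ C'(‖g‖ + ‖η‖)`. -/
theorem lifting_nonhomogeneous
    {X Xt Z : Type*}
    [NormedAddCommGroup X] [InnerProductSpace ℝ X] [CompleteSpace X]
    [NormedAddCommGroup Xt] [InnerProductSpace ℝ Xt] [CompleteSpace Xt]
    [NormedAddCommGroup Z] [InnerProductSpace ℝ Z] [CompleteSpace Z]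
    (ι : X →L[ℝ] Xt) (hι : Function.Injective ι)
    (T : Xt →L[ℝ] Z) (hT : Function.Surjective T)
    (R : Z →L[ℝ] X) (hTR : ∀ η : Z, T (ι (R η)) = η)
    (A : X →L[ℝ] StrongDual ℝ Xt)
    (C : ℝ) (hC : 0 < C)
    (hhom : ∀ g : ↥(LinearMap.ker (T : Xt →ₗ[ℝ] Z)) →L[ℝ] ℝ,
      (∃! u₀ : X, T (ι u₀) = 0 ∧ ∀ v : ↥(LinearMap.ker (T : Xt →ₗ[ℝ] Z)), A u₀ (v : Xt) = g v) ∧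
      ∀ u₀ : X, (T (ι u₀) = 0 ∧ ∀ v : ↥(LinearMap.ker (T : Xt →ₗ[ℝ] Z)), A u₀ (v : Xt) = g v) →
        ‖u₀‖ ≤ C * ‖g‖) :
    ∃ C' : ℝ, 0 < C' ∧
      ∀ (g : ↥(LinearMap.ker (T : Xt →ₗ[ℝ] Z)) →L[ℝ] ℝ) (η : Z),
        (∃! u : X, T (ι u) = η ∧ ∀ v : ↥(LinearMap.ker (T : Xt →ₗ[ℝ] Z)), A u (v : Xt) = g v) ∧
        ∀ u : X, (T (ι u) = η ∧ ∀ v : ↥(LinearMap.ker (T : Xt →ₗ[ℝ] Z)), A u (v : Xt) = g v) →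
          ‖u‖ ≤ C' * (‖g‖ + ‖η‖) := by

  refine ⟨C * (1 + ‖A‖ * ‖R‖) + ‖R‖ + 1, by positivity, ?_⟩
  intro g η
  set g' : ↥(LinearMap.ker (T : Xt →ₗ[ℝ] Z)) →L[ℝ] ℝ :=
    g - (A (R η)).comp (Submodule.subtypeL (LinearMap.ker (T : Xt →ₗ[ℝ] Z))) with hg'
  obtain ⟨⟨u₀, ⟨hu₀T, hu₀A⟩, huniq⟩, hbound⟩ := hhom g'
  have hsub : ∀ u : X, (T (ι u) = η ∧ ∀ v : ↥(LinearMap.ker (T : Xt →ₗ[ℝ] Z)), A u (v : Xt) = g v) →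
      (T (ι (u - R η)) = 0 ∧ ∀ v : ↥(LinearMap.ker (T : Xt →ₗ[ℝ] Z)), A (u - R η) (v : Xt) = g' v) := by
    intro u ⟨huT, huA⟩
    constructor
    · simp [map_sub, huT, hTR]
    · intro v
      simp [map_sub, hg', ContinuousLinearMap.sub_apply, huA v]
  have hg'norm : ‖g'‖ ≤ ‖g‖ + ‖A‖ * ‖R‖ * ‖η‖ := by
    refine le_trans (norm_sub_le g ((A (R η)).comp (Submodule.subtypeL (LinearMap.ker (T : Xt →ₗ[ℝ] Z))))) ?_
    gcongr
    refine le_trans ((A (R η)).opNorm_comp_le _) ?_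
    calc ‖A (R η)‖ * ‖Submodule.subtypeL (LinearMap.ker (T : Xt →ₗ[ℝ] Z))‖
        ≤ ‖A (R η)‖ * 1 := by
          gcongr; exact Submodule.norm_subtypeL_le _
      _ = ‖A (R η)‖ := mul_one _
      _ ≤ ‖A‖ * ‖R η‖ := A.le_opNorm _
      _ ≤ ‖A‖ * (‖R‖ * ‖η‖) := by gcongr; exact R.le_opNorm _
      _ = ‖A‖ * ‖R‖ * ‖η‖ := by ring
  constructor
  · refine ⟨u₀ + R η, ⟨?_, ?_⟩, ?_⟩
    · simp [map_add, hu₀T, hTR]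
    · intro v
      have h := hu₀A v
      simp [hg', ContinuousLinearMap.sub_apply] at h
      simp [map_add]
      linarith
    · intro u hu
      have h : u - R η = u₀ := huniq (u - R η) (hsub u hu)
      have : u - R η + R η = u₀ + R η := by rw [h]
      simpa using this
  · intro u hu
    have h1 : ‖u - R η‖ ≤ C * ‖g'‖ := hbound (u - R η) (hsub u hu)
    have h2 : ‖u‖ ≤ ‖u - R η‖ + ‖R η‖ := by
      simpa using norm_add_le (u - R η) (R η)
    have h3 : ‖R η‖ ≤ ‖R‖ * ‖η‖ := R.le_opNorm _
    have hA : (0:ℝ) ≤ ‖A‖ := ContinuousLinearMap.opNorm_nonneg A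
    have hR : (0:ℝ) ≤ ‖R‖ := norm_nonneg _
    have hg : (0:ℝ) ≤ ‖g‖ := ContinuousLinearMap.opNorm_nonneg g
    have hη : (0:ℝ) ≤ ‖η‖ := norm_nonneg _
    nlinarith [mul_le_mul_of_nonneg_left hg'norm hC.le, mul_nonneg hC.le hη,
      mul_nonneg hR hg, mul_nonneg (mul_nonneg hC.le (mul_nonneg hA hR)) hg]
end
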